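/- Let q ≥ 3 be an integer, let P be a face of the Farey graph 𝓕_q, and let u and v be two distinct vertices of P. If ⟨w_0, w_1, …, w_n⟩ is a path in 𝓕_q such that w_0 lies in one connected component of ℝ∞ \ {u, v} and w_n lies in the other connected component, then w_i ∈ {u, v} for some i. -/

import Mathlib

open OnePoint

noncomputable def lamq (q : ℕ) : ℝ := 2 * Real.cos (Real.pi / q)

abbrev RInf : Type := OnePoint ℝ

noncomputable def sigmaFun : RInf → RInf := fun z =>
  match z with
  | Option.none => ((0 : ℝ) : RInf)
  | Option.some x => if x = 0 then (∞ : RInf) else ((-x⁻¹ : ℝ) : RInf)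

lemma sigmaFun_invol (z : RInf) : sigmaFun (sigmaFun z) = z := by
  cases z with
  | none => simp [sigmaFun, OnePoint.infty] <;> rfl
  | some x =>
    by_cases h : x = 0
    · simp only [sigmaFun, h, if_true, if_pos]
      rfl
    · simp only [sigmaFun, h, if_false]
      have h1 : (-x⁻¹ : ℝ) ≠ 0 := by simpa using h
      simp only [h1, if_false]
      have h2 : (-(-x⁻¹)⁻¹ : ℝ) = x := by
        rw [inv_neg, inv_inv, neg_neg]
      rw [h2]
      rfl

noncomputable def sigmaP : Equiv.Perm RInf :=
  ⟨sigmaFun, sigmaFun, sigmaFun_invol, sigmaFun_invol⟩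

noncomputable def tauP (q : ℕ) : Equiv.Perm RInf where
  toFun z := match z with
    | Option.none => (∞ : RInf)
    | Option.some x => Option.some (x + lamq q)
  invFun z := match z with
    | Option.none => (∞ : RInf)
    | Option.some x => Option.some (x - lamq q)
  left_inv z := by cases z <;> simp [OnePoint.infty] <;> rfl
  right_inv z := by cases z <;> simp [OnePoint.infty] <;> rfl

noncomputable def Gq (q : ℕ) : Subgroup (Equiv.Perm RInf) :=
  Subgroup.closure {sigmaP, tauP q}

def FareyVertex (q : ℕ) (v : RInf) : Prop := ∃ g ∈ Gq q, g ∞ = v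

def FareyAdj (q : ℕ) (u v : RInf) : Prop :=
  u ≠ v ∧ ∃ g ∈ Gq q,
    ((g ((0:ℝ) : RInf) = u ∧ g ∞ = v) ∨ (g ((0:ℝ) : RInf) = v ∧ g ∞ = u))

noncomputable def rhoP (q : ℕ) : Equiv.Perm RInf := tauP q * sigmaP

def V0 (q : ℕ) : Set RInf := {v | ∃ i : ℕ, i < q ∧ (rhoP q ^ i) ∞ = v}

def IsFace (q : ℕ) (P : Set RInf) : Prop := ∃ g ∈ Gq q, P = ⇑g '' V0 q

/-- `y` lies in the connected component of `ℝ∞ \ {u, v}` that does not contain `x`. -/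
def SepSide (u v x y : RInf) : Prop :=
  y ∈ ({u, v}ᶜ : Set RInf) ∧ x ∉ connectedComponentIn ({u, v}ᶜ : Set RInf) y

noncomputable def Tq (q : ℕ) (b : ℤ) : RInf → RInf := fun z =>
  match z with
  | Option.none => ((b * lamq q : ℝ) : RInf)
  | Option.some x => if x = 0 then (∞ : RInf) else ((b * lamq q - x⁻¹ : ℝ) : RInf)

noncomputable def RosenValue (q : ℕ) (bs : List ℤ) : RInf := bs.foldr (Tq q) ∞

def IsGeodesicRosen (q : ℕ) (bs : List ℤ) : Prop :=
  bs ≠ [] ∧ RosenValue q bs ≠ ∞ ∧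
  ∀ cs : List ℤ, cs ≠ [] → RosenValue q cs = RosenValue q bs → bs.length ≤ cs.length

def IsPathFrom (q : ℕ) (p : List RInf) (x y : RInf) : Prop :=
  p.Chain' (FareyAdj q) ∧ p.head? = Option.some x ∧ p.getLast? = Option.some y

def IsGeodesicPath (q : ℕ) (p : List RInf) (x y : RInf) : Prop :=
  IsPathFrom q p x y ∧ ∀ p' : List RInf, IsPathFrom q p' x y → p.length ≤ p'.length

/-- `{u, v}` is a pair of `y`-parents of `x`. -/
def IsParentPair (q : ℕ) (y x u v : RInf) : Prop :=
  ∃ g ∈ Gq q, ∃ i : ℤ,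
    g ((rhoP q ^ i) ∞) = x ∧
    ({u, v} : Set RInf) = {g ((rhoP q ^ (i-1)) ∞), g ((rhoP q ^ (i+1)) ∞)} ∧
    SepSide u v x y

/-- `P 0, …, P (n-1)` is the q-chain from `x` to `y`. -/
def IsQChain (q : ℕ) (x y : RInf) (n : ℕ) (P : ℕ → Set RInf) : Prop :=
  1 ≤ n ∧ (∀ j < n, IsFace q (P j)) ∧
  (∃ g ∈ Gq q, ∃ i : ℤ,
      g ((rhoP q ^ i) ∞) = x ∧ P 0 = ⇑g '' V0 q ∧
      SepSide (g ((rhoP q ^ (i-1)) ∞)) (g ((rhoP q ^ (i+1)) ∞)) x y) ∧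
  y ∈ P (n-1) ∧ (∀ j, j < n - 1 → y ∉ P j) ∧
  (∀ j, j + 1 < n → ∃ a b : RInf, FareyAdj q a b ∧ a ∈ P j ∧ b ∈ P j ∧
      (y ∈ ({a, b}ᶜ : Set RInf) ∧
        ∀ w ∈ P j, w ∉ connectedComponentIn ({a, b}ᶜ : Set RInf) y) ∧
      P (j+1) ≠ P j ∧ a ∈ P (j+1) ∧ b ∈ P (j+1))

/-- Fibonacci numbers with `F 0 = 1`, `F 1 = 2`. -/
def fibF : ℕ → ℕ
  | 0 => 1
  | 1 => 2
  | (n+2) => fibF (n+1) + fibF n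

/-!
Conjugating by an element of `G_q`, the face becomes `V₀ = {ρⁱ ∞}`. The rotation `ρ` has
order `q`, and for `0 < k < q` the entries of `ρᵏ` are the numbers `sin (n π / q) / sin (π / q)`,
which are nonnegative; hence `ρᵏ` maps the arc `[-∞, 0]` into `[0, ∞]`, and so does `σ` in the
other direction. A ping-pong argument on the alternating words `ρ^j σ ρ^{k₁} σ ⋯ ρ^{kₙ} σ`
shows that every edge `{h 0, h ∞}` of `𝓕_q` lies in one of the arcs `ρʲ [-∞, 0]` between two
consecutive vertices of `V₀`. Such an arc meets the face only in its endpoints, so the endpoints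
of an edge avoiding `u` and `v` are joined by a connected set avoiding `u` and `v`, and a path
avoiding `u` and `v` stays in one component of `ℝ∞ \ {u, v}`.
-/

open Real Set Filter Topology

noncomputable def heckeSeq (q : ℕ) : ℕ → ℝ
  | 0 => 0
  | 1 => 1
  | n + 2 => lamq q * heckeSeq q (n + 1) - heckeSeq q n

lemma heckeSeq_mul_sin (q n : ℕ) : heckeSeq q n * sin (π / q) = sin (n * (π / q)) := by
  induction n using Nat.twoStepInduction with
  | zero => simp [heckeSeq]
  | one => simp [heckeSeq]
  | more n ih₀ ih₁ =>
    have h := sin_add ((n + 1) * (π / q)) (π / q)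
    have h' := sin_sub ((n + 1) * (π / q)) (π / q)
    rw [heckeSeq, lamq]
    push_cast at ih₁ ⊢
    rw [show ((n : ℝ) + 2) * (π / q) = (n + 1) * (π / q) + π / q by ring, h]
    rw [show (n : ℝ) * (π / q) = (n + 1) * (π / q) - π / q by ring, h'] at ih₀
    linear_combination (2 * cos (π / q)) * ih₁ - ih₀

lemma sin_pi_div_pos {q : ℕ} (hq : 2 ≤ q) : 0 < sin (π / q) := by
  have : (2 : ℝ) ≤ q := by exact_mod_cast hq
  apply sin_pos_of_pos_of_lt_pi (by positivity)
  exact div_lt_self pi_pos (by linarith)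

lemma heckeSeq_eq_sin_div {q : ℕ} (hq : 2 ≤ q) (n : ℕ) :
    heckeSeq q n = sin (n * (π / q)) / sin (π / q) := by
  rw [← heckeSeq_mul_sin, mul_div_cancel_right₀ _ (sin_pi_div_pos hq).ne']

lemma heckeSeq_nonneg {q : ℕ} (hq : 2 ≤ q) {n : ℕ} (hn : n ≤ q) : 0 ≤ heckeSeq q n := by
  rw [heckeSeq_eq_sin_div hq]
  refine div_nonneg (sin_nonneg_of_nonneg_of_le_pi (by positivity) ?_) (sin_pi_div_pos hq).le
  calc (n : ℝ) * (π / q) ≤ q * (π / q) := by gcongr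
    _ = π := by field_simp

lemma heckeSeq_pos {q : ℕ} (hq : 2 ≤ q) {n : ℕ} (h0 : 0 < n) (hn : n < q) :
    0 < heckeSeq q n := by
  rw [heckeSeq_eq_sin_div hq]
  refine div_pos (sin_pos_of_pos_of_lt_pi (by positivity) ?_) (sin_pi_div_pos hq)
  calc (n : ℝ) * (π / q) < q * (π / q) := by gcongr
    _ = π := by field_simp

lemma heckeSeq_self {q : ℕ} (hq : 2 ≤ q) : heckeSeq q q = 0 := by
  rw [heckeSeq_eq_sin_div hq, mul_div_cancel₀ _ (by positivity), sin_pi, zero_div]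

lemma heckeSeq_self_sub_one {q : ℕ} (hq : 2 ≤ q) : heckeSeq q (q - 1) = 1 := by
  rw [heckeSeq_eq_sin_div hq, Nat.cast_sub (by omega), sub_mul, mul_div_cancel₀ _ (by positivity),
    Nat.cast_one, one_mul, sin_pi_sub, div_self (sin_pi_div_pos hq).ne']

lemma heckeSeq_self_add_one {q : ℕ} (hq : 2 ≤ q) : heckeSeq q (q + 1) = -1 := by
  obtain ⟨m, rfl⟩ : ∃ m, q = m + 1 := ⟨q - 1, by omega⟩
  have h := heckeSeq_self_sub_one hq
  rw [Nat.add_sub_cancel] at h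
  rw [heckeSeq, heckeSeq_self hq, h]
  ring

@[simp] lemma sigmaP_infty : sigmaP ∞ = ((0 : ℝ) : RInf) := rfl

@[simp] lemma sigmaP_zero : sigmaP (0 : ℝ) = ∞ := if_pos rfl

lemma sigmaP_coe_of_ne {x : ℝ} (hx : x ≠ 0) : sigmaP x = ((-x⁻¹ : ℝ) : RInf) := if_neg hx

@[simp] lemma tauP_infty (q : ℕ) : tauP q ∞ = ∞ := rfl

@[simp] lemma tauP_coe (q : ℕ) (x : ℝ) : tauP q x = ((x + lamq q : ℝ) : RInf) := rfl

noncomputable def rhoGL (q : ℕ) : GL (Fin 2) ℝ :=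
  .mkOfDetNeZero !![lamq q, -1; 1, 0] (by simp [Matrix.det_fin_two])

lemma rhoP_apply (q : ℕ) (z : RInf) : rhoP q z = rhoGL q • z := by
  induction z using OnePoint.rec with
  | infty => simp [rhoP, rhoGL, smul_infty_eq_ite]
  | coe x =>
    rcases eq_or_ne x 0 with rfl | hx
    · simp [rhoP, rhoGL, smul_some_eq_ite]
    · simp [rhoP, rhoGL, smul_some_eq_ite, sigmaP_coe_of_ne hx, hx]
      field_simp
      ring

lemma rhoP_pow_apply (q k : ℕ) (z : RInf) : (rhoP q ^ k) z = (rhoGL q ^ k) • z := by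
  induction k generalizing z with
  | zero => simp
  | succ k ih => rw [pow_succ', Equiv.Perm.mul_apply, ih, rhoP_apply, pow_succ', mul_smul]

lemma coe_rhoGL_pow_succ (q k : ℕ) :
    ((rhoGL q ^ (k + 1) : GL (Fin 2) ℝ) : Matrix (Fin 2) (Fin 2) ℝ) =
      !![heckeSeq q (k + 2), -heckeSeq q (k + 1); heckeSeq q (k + 1), -heckeSeq q k] := by
  induction k with
  | zero => simp [rhoGL, heckeSeq]
  | succ k ih =>
    rw [pow_succ', Units.val_mul, ih]
    simp only [rhoGL, Matrix.GeneralLinearGroup.val_mkOfDetNeZero]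
    ext i j
    fin_cases i <;> fin_cases j <;> simp [heckeSeq] <;> ring

lemma rhoP_pow_self {q : ℕ} (hq : 2 ≤ q) : rhoP q ^ q = 1 := by
  obtain ⟨k, rfl⟩ : ∃ k, q = k + 1 := ⟨q - 1, by omega⟩
  have h₁ := heckeSeq_self_sub_one hq
  rw [Nat.add_sub_cancel] at h₁
  ext z
  rw [rhoP_pow_apply]
  induction z using OnePoint.rec with
  | infty =>
    rw [smul_infty_eq_ite, coe_rhoGL_pow_succ]
    simp [heckeSeq_self hq]
  | coe x =>
    rw [smul_some_eq_ite, coe_rhoGL_pow_succ]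
    simp [heckeSeq_self hq, h₁, heckeSeq_self_add_one hq]

lemma rhoP_inv {q : ℕ} (hq : 2 ≤ q) : (rhoP q)⁻¹ = rhoP q ^ (q - 1) := by
  refine inv_eq_of_mul_eq_one_right ?_
  rw [← pow_succ', Nat.sub_add_cancel (by omega), rhoP_pow_self hq]

def negArc : Set RInf := insert ∞ (((↑) : ℝ → RInf) '' Iic 0)

def posArc : Set RInf := insert ∞ (((↑) : ℝ → RInf) '' Ici 0)

@[simp] lemma infty_mem_negArc : ∞ ∈ negArc := mem_insert _ _

@[simp] lemma infty_mem_posArc : ∞ ∈ posArc := mem_insert _ _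

@[simp] lemma coe_mem_negArc {x : ℝ} : (x : RInf) ∈ negArc ↔ x ≤ 0 := by
  simp [negArc]

@[simp] lemma coe_mem_posArc {x : ℝ} : (x : RInf) ∈ posArc ↔ 0 ≤ x := by
  simp [posArc]

lemma mapsTo_sigmaP_posArc : MapsTo sigmaP posArc negArc := by
  intro z hz
  induction z using OnePoint.rec with
  | infty => simp
  | coe x =>
    rcases eq_or_ne x 0 with rfl | hx
    · simp
    · rw [sigmaP_coe_of_ne hx, coe_mem_negArc, neg_nonpos, inv_nonneg]
      exact coe_mem_posArc.1 hz

lemma mapsTo_rhoP_pow_negArc {q k : ℕ} (hq : 2 ≤ q) (hk₀ : 0 < k) (hk : k < q) :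
    MapsTo (rhoP q ^ k) negArc posArc := by
  obtain ⟨k, rfl⟩ : ∃ j, k = j + 1 := ⟨k - 1, by omega⟩
  have s₀ := heckeSeq_nonneg hq (n := k) (by omega)
  have s₁ := heckeSeq_pos hq (n := k + 1) (by omega) hk
  have s₂ := heckeSeq_nonneg hq (n := k + 2) (by omega)
  intro z hz
  rw [rhoP_pow_apply]
  induction z using OnePoint.rec with
  | infty =>
    simp only [smul_infty_eq_ite, coe_rhoGL_pow_succ]
    simp [s₁.ne', div_nonneg s₂ s₁.le]
  | coe x =>
    have hx := coe_mem_negArc.1 hz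
    simp only [smul_some_eq_ite, coe_rhoGL_pow_succ]
    split_ifs
    · exact infty_mem_posArc
    · rw [coe_mem_posArc]
      apply div_nonneg_of_nonpos <;> simp <;> nlinarith

lemma tendsto_coe_cobounded : Tendsto ((↑) : ℝ → RInf) (Bornology.cobounded ℝ) (𝓝 ∞) := by
  rw [Metric.cobounded_eq_cocompact, ← coclosedCompact_eq_cocompact]
  exact OnePoint.tendsto_coe_infty

lemma continuous_sigmaP : Continuous sigmaP := by
  have hne : ∀ {l : Filter ℝ}, {0}ᶜ ∈ l →
      (fun x : ℝ => ((-x⁻¹ : ℝ) : RInf)) =ᶠ[l] fun x => sigmaP x := fun h =>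
    Filter.mem_of_superset h fun x hx => (sigmaP_coe_of_ne hx).symm
  rw [OnePoint.continuous_iff, coclosedCompact_eq_cocompact, ← Metric.cobounded_eq_cocompact]
  refine ⟨Tendsto.congr' (hne ?_) ?_, continuous_iff_continuousAt.2 fun x => ?_⟩
  · rw [Metric.cobounded_eq_cocompact]
    exact isCompact_singleton.compl_mem_cocompact
  · have h : Tendsto (fun x : ℝ => -x⁻¹) (Bornology.cobounded ℝ) (𝓝 0) := by
      simpa using (tendsto_inv₀_cobounded (α := ℝ)).neg
    exact (OnePoint.continuous_coe.tendsto (0 : ℝ)).comp h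
  rcases eq_or_ne x 0 with rfl | hx
  · rw [ContinuousAt, sigmaP_zero, ← nhdsNE_sup_pure, tendsto_sup, tendsto_pure_left]
    refine ⟨Tendsto.congr' (hne self_mem_nhdsWithin) ?_, fun s hs => ?_⟩
    · exact tendsto_coe_cobounded.comp (tendsto_neg_cobounded.comp tendsto_inv₀_nhdsNE_zero)
    · simpa using mem_of_mem_nhds hs
  · refine ContinuousAt.congr ?_ (hne (isOpen_compl_singleton.mem_nhds hx))
    exact OnePoint.continuous_coe.continuousAt.comp (continuousAt_inv₀ hx).neg

lemma sigmaP_mul_self : sigmaP * sigmaP = 1 := Equiv.ext sigmaFun_invol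

lemma sigmaP_inv : sigmaP⁻¹ = sigmaP := inv_eq_of_mul_eq_one_right sigmaP_mul_self

lemma rhoP_mul_sigmaP (q : ℕ) : rhoP q * sigmaP = tauP q := by
  rw [rhoP, mul_assoc, sigmaP_mul_self, mul_one]

lemma sigmaP_mem_Gq (q : ℕ) : sigmaP ∈ Gq q := Subgroup.subset_closure (mem_insert _ _)

lemma tauP_mem_Gq (q : ℕ) : tauP q ∈ Gq q :=
  Subgroup.subset_closure (mem_insert_of_mem _ rfl)

lemma rhoP_mem_Gq (q : ℕ) : rhoP q ∈ Gq q := mul_mem (tauP_mem_Gq q) (sigmaP_mem_Gq q)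

lemma tauP_eq_onePointCongr (q : ℕ) :
    tauP q = (Homeomorph.addRight (lamq q)).onePointCongr.toEquiv := by
  ext z
  induction z using OnePoint.rec <;> rfl

lemma continuous_of_mem_Gq {q : ℕ} {g : Equiv.Perm RInf} (hg : g ∈ Gq q) : Continuous g := by
  induction hg using Subgroup.closure_induction'' with
  | mem x hx =>
    rcases hx with rfl | rfl
    · exact continuous_sigmaP
    · rw [tauP_eq_onePointCongr]
      exact Homeomorph.continuous _
  | inv_mem x hx =>
    rcases hx with rfl | rfl
    · rw [sigmaP_inv]
      exact continuous_sigmaP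
    · rw [tauP_eq_onePointCongr]
      exact Homeomorph.continuous_symm _
  | one => exact continuous_id
  | mul x y _ _ hx hy => exact hx.comp hy

inductive IsAltWord (q : ℕ) : Equiv.Perm RInf → Prop
  | one : IsAltWord q 1
  | sigma : IsAltWord q sigmaP
  | cons {k : ℕ} {g : Equiv.Perm RInf} : 0 < k → k < q → IsAltWord q g →
      IsAltWord q (sigmaP * rhoP q ^ k * g)

lemma IsAltWord.mapsTo {q : ℕ} (hq : 2 ≤ q) {g : Equiv.Perm RInf} (hg : IsAltWord q g) :
    MapsTo g (negArc ∩ posArc) negArc := by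
  induction hg with
  | one => exact fun z hz => hz.1
  | sigma => exact fun z hz => mapsTo_sigmaP_posArc hz.2
  | cons hk₀ hk _ ih =>
    simp only [Equiv.Perm.coe_mul]
    exact mapsTo_sigmaP_posArc.comp ((mapsTo_rhoP_pow_negArc hq hk₀ hk).comp ih)

lemma IsAltWord.exists_sigmaP_mul {q : ℕ} {g : Equiv.Perm RInf} (hg : IsAltWord q g) :
    ∃ j g', IsAltWord q g' ∧ sigmaP * g = rhoP q ^ j * g' := by
  cases hg with
  | one => exact ⟨0, sigmaP, .sigma, by simp⟩
  | sigma => exact ⟨0, 1, .one, by simp [sigmaP_mul_self]⟩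
  | @cons k g' _ _ hg' => exact ⟨k, g', hg', by simp [← mul_assoc, sigmaP_mul_self]⟩

lemma IsAltWord.exists_sigmaP_mul_rhoP_pow_mul {q : ℕ} (hq : 2 ≤ q) {g : Equiv.Perm RInf}
    (hg : IsAltWord q g) (j : ℕ) :
    ∃ j' g', IsAltWord q g' ∧ sigmaP * (rhoP q ^ j * g) = rhoP q ^ j' * g' := by
  rw [pow_eq_pow_mod j (rhoP_pow_self hq)]
  rcases Nat.eq_zero_or_pos (j % q) with hj | hj
  · rw [hj, pow_zero, one_mul]
    exact hg.exists_sigmaP_mul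
  · exact ⟨0, _, .cons hj (Nat.mod_lt _ (by omega)) hg, by simp [mul_assoc]⟩

theorem exists_eq_rhoP_pow_mul_isAltWord {q : ℕ} (hq : 2 ≤ q) {h : Equiv.Perm RInf}
    (hh : h ∈ Gq q) : ∃ j g, IsAltWord q g ∧ h = rhoP q ^ j * g := by
  induction hh using Subgroup.closure_induction_left with
  | one => exact ⟨0, 1, .one, by simp⟩
  | mul_left x hx y _ ih =>
    obtain ⟨j, g, hg, rfl⟩ := ih
    obtain ⟨j', g', hg', he⟩ := hg.exists_sigmaP_mul_rhoP_pow_mul hq j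
    rcases hx with rfl | rfl
    · exact ⟨j', g', hg', he⟩
    · refine ⟨j' + 1, g', hg', ?_⟩
      rw [← rhoP_mul_sigmaP, mul_assoc, he, pow_succ', mul_assoc]
  | inv_mul_cancel x hx y _ ih =>
    obtain ⟨j, g, hg, rfl⟩ := ih
    rcases hx with rfl | rfl
    · rw [sigmaP_inv]
      exact hg.exists_sigmaP_mul_rhoP_pow_mul hq j
    · rw [← rhoP_mul_sigmaP, mul_inv_rev, sigmaP_inv, rhoP_inv hq, mul_assoc, ← mul_assoc _ _ g,
        ← pow_add]
      exact hg.exists_sigmaP_mul_rhoP_pow_mul hq _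

theorem exists_mapsTo_rhoP_pow_image_negArc {q : ℕ} (hq : 2 ≤ q) {h : Equiv.Perm RInf}
    (hh : h ∈ Gq q) : ∃ j : ℕ, MapsTo h (negArc ∩ posArc) (⇑(rhoP q ^ j) '' negArc) := by
  obtain ⟨j, g, hg, rfl⟩ := exists_eq_rhoP_pow_mul_isAltWord hq hh
  exact ⟨j, (mapsTo_image _ _).comp (hg.mapsTo hq)⟩

lemma rhoP_zpow_infty_mem_posArc {q : ℕ} (hq : 2 ≤ q) (m : ℤ) : (rhoP q ^ m) ∞ ∈ posArc := by
  rw [zpow_eq_zpow_emod' m (rhoP_pow_self hq)]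
  obtain ⟨n, hn⟩ := Int.eq_ofNat_of_zero_le (Int.emod_nonneg m (by omega : (q : ℤ) ≠ 0))
  have hnq : n < q := by
    have := Int.emod_lt_of_pos m (by omega : (0 : ℤ) < q)
    omega
  rw [hn, zpow_natCast]
  rcases Nat.eq_zero_or_pos n with rfl | hn₀
  · exact infty_mem_posArc
  · exact mapsTo_rhoP_pow_negArc hq hn₀ hnq infty_mem_negArc

lemma preimage_mul_rhoP_pow_image_V0_subset_posArc {q : ℕ} (hq : 2 ≤ q)
    (g : Equiv.Perm RInf) (j : ℕ) : ⇑(g * rhoP q ^ j) ⁻¹' (g '' V0 q) ⊆ posArc := by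
  rintro z ⟨_, ⟨i, -, rfl⟩, hiz⟩
  rw [Equiv.Perm.mul_apply, g.injective.eq_iff] at hiz
  have hz : z = (rhoP q ^ (-(j : ℤ) + i)) ∞ := by
    rw [zpow_add, zpow_neg, zpow_natCast, zpow_natCast, Equiv.Perm.mul_apply, hiz]
    simp
  exact hz ▸ rhoP_zpow_infty_mem_posArc hq _

lemma negArc_subset_closure_coe_Iio : negArc ⊆ closure (((↑) : ℝ → RInf) '' Iio 0) := by
  rintro z (rfl | ⟨x, hx, rfl⟩)
  · have h := OnePoint.tendsto_coe_infty (X := ℝ)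
    rw [coclosedCompact_eq_cocompact] at h
    refine mem_closure_of_tendsto (h.mono_left (atBot_le_cocompact)) ?_
    filter_upwards [eventually_lt_atBot 0] with y hy using mem_image_of_mem _ hy
  · exact image_closure_subset_closure_image OnePoint.continuous_coe
      (mem_image_of_mem _ (by rwa [closure_Iio]))

lemma mem_connectedComponentIn_of_mem_image_negArc {φ : RInf → RInf} (hφ : Continuous φ)
    {S : Set RInf} (hS : φ ⁻¹' Sᶜ ⊆ posArc) {a b : RInf} (ha : a ∈ φ '' negArc)
    (hb : b ∈ φ '' negArc) (haS : a ∈ S) (hbS : b ∈ S) : b ∈ connectedComponentIn S a := by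
  have hT : IsPreconnected (negArc ∩ φ ⁻¹' S) := by
    refine (isPreconnected_Iio.image _ OnePoint.continuous_coe.continuousOn).subset_closure ?_
      (inter_subset_left.trans negArc_subset_closure_coe_Iio)
    rintro _ ⟨x, hx, rfl⟩
    exact ⟨coe_mem_negArc.2 hx.le, by_contra fun hxS => not_le.2 hx (coe_mem_posArc.1 (hS hxS))⟩
  have hmem : ∀ {c}, c ∈ φ '' negArc → c ∈ S → c ∈ φ '' (negArc ∩ φ ⁻¹' S) := by
    rintro _ ⟨z, hz, rfl⟩ hcS
    exact ⟨z, ⟨hz, hcS⟩, rfl⟩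
  refine (hT.image _ hφ.continuousOn).subset_connectedComponentIn (hmem ha haS) ?_ (hmem hb hbS)
  rintro _ ⟨z, ⟨-, hz⟩, rfl⟩
  exact hz

theorem mem_connectedComponentIn_of_fareyAdj {q : ℕ} (hq : 2 ≤ q) {P : Set RInf}
    (hP : IsFace q P) {S : Set RInf} (hS : Sᶜ ⊆ P) {a b : RInf} (hab : FareyAdj q a b)
    (ha : a ∈ S) (hb : b ∈ S) : b ∈ connectedComponentIn S a := by
  obtain ⟨g, hg, rfl⟩ := hP
  obtain ⟨-, h, hh, hend⟩ := hab
  obtain ⟨j, hj⟩ := exists_mapsTo_rhoP_pow_image_negArc hq (mul_mem (inv_mem hg) hh)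
  have hφ : MapsTo h (negArc ∩ posArc) (⇑(g * rhoP q ^ j) '' negArc) := by
    simpa [Function.comp_def, image_image] using (mapsTo_image g _).comp hj
  have hface := (preimage_mono hS).trans (preimage_mul_rhoP_pow_image_V0_subset_posArc hq g j)
  have hcont := continuous_of_mem_Gq (mul_mem hg (pow_mem (rhoP_mem_Gq q) j))
  have h0 := hφ (⟨by simp, by simp⟩ : ((0 : ℝ) : RInf) ∈ negArc ∩ posArc)
  have hinf := hφ (⟨by simp, by simp⟩ : ∞ ∈ negArc ∩ posArc)
  rcases hend with ⟨rfl, rfl⟩ | ⟨rfl, rfl⟩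
  · exact mem_connectedComponentIn_of_mem_image_negArc hcont hface h0 hinf ha hb
  · exact mem_connectedComponentIn_of_mem_image_negArc hcont hface hinf h0 ha hb

theorem List.IsChain.mem_connectedComponentIn {X : Type*} [TopologicalSpace X]
    {r : X → X → Prop} {S : Set X}
    (hr : ∀ a b, r a b → a ∈ S → b ∈ S → b ∈ connectedComponentIn S a) {l : List X}
    (hl : l.IsChain r) (hlS : ∀ x ∈ l, x ∈ S) {x y : X} (hx : x ∈ l) (hy : y ∈ l) :
    y ∈ connectedComponentIn S x := by
  have hne : l ≠ [] := List.ne_nil_of_mem hx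
  have hcomp : ∀ z ∈ l, z ∈ connectedComponentIn S (l.head hne) := by
    have hl' : l.IsChain fun a b => r a b ∧ b ∈ S :=
      hl.imp_of_mem_imp fun a b _ hb hab => ⟨hab, hlS b hb⟩
    refine hl'.induction _ _ (fun a b hab ha => ?_) fun _ =>
      _root_.mem_connectedComponentIn (hlS _ (l.head_mem hne))
    rw [connectedComponentIn_eq ha]
    exact hr a b hab.1 (connectedComponentIn_subset _ _ ha) hab.2
  rw [← connectedComponentIn_eq (hcomp x hx)]
  exact hcomp y hy

theorem stmt9_general (q : ℕ) (hq : 3 ≤ q) (P : Set RInf) (hP : IsFace q P)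
    (u v : RInf) (hu : u ∈ P) (hv : v ∈ P)
    (p : List RInf) (hchain : p.Chain' (FareyAdj q))
    (w0 wn : RInf) (h0 : p.head? = Option.some w0) (hn : p.getLast? = Option.some wn)
    (hdiff : wn ∉ connectedComponentIn ({u, v}ᶜ : Set RInf) w0) :
    u ∈ p ∨ v ∈ p := by
  by_contra! hcon
  have hpS : ∀ w ∈ p, w ∈ ({u, v}ᶜ : Set RInf) := by
    rintro w hw (rfl | rfl)
    exacts [hcon.1 hw, hcon.2 hw]
  have hS : ({u, v}ᶜ : Set RInf)ᶜ ⊆ P := by simp [insert_subset_iff, hu, hv]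
  exact hdiff <| hchain.mem_connectedComponentIn
    (fun a b => mem_connectedComponentIn_of_fareyAdj (by omega) hP hS) hpS
    (List.mem_of_mem_head? h0) (List.mem_of_getLast? hn)

/-- a path whose endpoints lie in different connected components of
the complement of two distinct vertices `u`, `v` of a face must pass through `u`
or `v`. -/
theorem stmt9 (q : ℕ) (hq : 3 ≤ q) (P : Set RInf) (hP : IsFace q P)
    (u v : RInf) (hu : u ∈ P) (hv : v ∈ P) (huv : u ≠ v)
    (p : List RInf) (hchain : p.Chain' (FareyAdj q))
    (w0 wn : RInf) (h0 : p.head? = Option.some w0) (hn : p.getLast? = Option.some wn)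
    (hw0 : w0 ∈ ({u, v}ᶜ : Set RInf)) (hwn : wn ∈ ({u, v}ᶜ : Set RInf))
    (hdiff : wn ∉ connectedComponentIn ({u, v}ᶜ : Set RInf) w0) :
    u ∈ p ∨ v ∈ p :=
  stmt9_general q hq P hP u v hu hv p hchain w0 wn h0 hn hdiff
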